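/- In any bad Delannoy path W = w_1...w_l from (0,0) to (n,n), the first step w_k of maximal depth satisfies: w_k = N; the first non-D step after position k (if it exists) is E; and the last non-D step before position k (if it exists) is N. -/

import Mathlib

inductive Step : Type
  | E | D | N
deriving DecidableEq

instance : Fintype Step :=
  ⟨{Step.E, Step.D, Step.N}, fun x => by cases x <;> simp⟩

open Step Polynomial

/-- All words of length `l` over the step alphabet. -/
def Words (l : ℕ) : Finset (List Step) :=
  (Finset.univ : Finset (Fin l → Step)).image List.ofFn

/-- Delannoy paths from (0,0) to (m,n) with `l` steps, encoded as words:
`#E + #D = m`, `#N + #D = n`, length `l`. -/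
def DelSet (m n l : ℕ) : Finset (List Step) :=
  (Words l).filter fun w => w.count E + w.count D = m ∧ w.count N + w.count D = n

/-- A word is bad if some prefix contains more N's than E's. -/
def bad (w : List Step) : Bool :=
  (List.range (w.length + 1)).any fun k => (w.take k).count E < (w.take k).count N

/-- Bad Delannoy paths from (0,0) to (n,n) with `l` steps. -/
def BDelSet (n l : ℕ) : Finset (List Step) :=
  (DelSet n n l).filter fun w => bad w

/-- Schröder paths: Delannoy paths to (n,n) never going above the diagonal. -/
def SchSet (n l : ℕ) : Finset (List Step) :=
  (DelSet n n l).filter fun w => ¬ bad w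

/-- Major index of a word w_1 ⋯ w_l with respect to a ranking of the letters:
the sum of all positions i (1 ≤ i ≤ l-1) with w_i > w_{i+1}. -/
def maj (rank : Step → ℕ) (w : List Step) : ℕ :=
  ∑ i ∈ Finset.range (w.length - 1),
    if rank (w.getD (i + 1) E) < rank (w.getD i E) then i + 1 else 0

/-- q-integer [m] = 1 + q + ⋯ + q^{m-1}. -/
noncomputable def qint (m : ℕ) : Polynomial ℚ :=
  ∑ i ∈ Finset.range m, X ^ i

/-- q-factorial. -/
noncomputable def qfact : ℕ → Polynomial ℚ
  | 0 => 1
  | m + 1 => qfact m * qint (m + 1)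

/-- Gaussian binomial coefficient, via the q-Pascal recurrence. -/
noncomputable def qbinom : ℕ → ℕ → Polynomial ℚ
  | _, 0 => 1
  | 0, _ + 1 => 0
  | m + 1, k + 1 => qbinom m k + X ^ (k + 1) * qbinom m (k + 1)

/-- q-trinomial coefficient [l]!/([a]![b]![c]!), defined when a+b+c = l. -/
noncomputable def qbinom3 (l a b c : ℕ) : Polynomial ℚ :=
  if a + b + c = l then qbinom l a * qbinom (l - a) b else 0

/-- Depth after the first `i` steps: #N − #E. -/
def depth (w : List Step) (i : ℕ) : ℤ :=
  ((w.take i).count N : ℤ) - (w.take i).count E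

/-- `k` (0 ≤ k ≤ l) achieves the maximal running depth. -/
def isMaxDepth (w : List Step) (k : ℕ) : Bool :=
  (List.range (w.length + 1)).all fun i => decide (depth w i ≤ depth w k)

/-- The first index (number of steps) at which the running depth is maximal. -/
def firstDeep (w : List Step) : ℕ :=
  (List.range (w.length + 1)).findIdx (isMaxDepth w)

/-- The last index at which the running depth is maximal. -/
def lastDeep (w : List Step) : ℕ :=
  w.length - (List.range (w.length + 1)).reverse.findIdx (isMaxDepth w)

/-- Replace the first deepest step (the step w_k, k = firstDeep) with E. -/
def phi (w : List Step) : List Step := w.set (firstDeep w - 1) E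

/-- Replace the step following the last deepest point with N. -/
def phiInv (w : List Step) : List Step := w.set (lastDeep w) N

/-- Number of consecutive D's immediately after the first deepest step. -/
def runS (w : List Step) : ℕ := ((w.drop (firstDeep w)).takeWhile (· == D)).length

/-- Number of consecutive D's immediately before the first deepest step. -/
def runR (w : List Step) : ℕ :=
  ((w.take (firstDeep w - 1)).reverse.takeWhile (· == D)).length

/-- The window map: replace W₁ = D^r w_k D^s by D^{r-1} E D^{s+1} if r ≥ 1,
and by D^s E if r = 0. -/
def phiWin (w : List Step) : List Step :=
  let k := firstDeep w - 1
  let r := runR w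
  let s := runS w
  let seg : List Step :=
    if 1 ≤ r then List.replicate (r - 1) D ++ [E] ++ List.replicate (s + 1) D
    else List.replicate s D ++ [E]
  w.take (k - r) ++ seg ++ w.drop (k + s + 1)

/-- 0-based index of the first step after which the path is above the diagonal. -/
def firstAbove (w : List Step) : ℕ :=
  (List.range w.length).findIdx fun i =>
    decide ((w.take (i + 1)).count E < (w.take (i + 1)).count N)

/-- The map ψ of Bonin–Shapiro–Simion: replace with E the last N of the maximal
run of consecutive N's beginning at the first step going above the diagonal. -/
def psi (w : List Step) : List Step :=
  let i := firstAbove w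
  let j := i + ((w.drop i).takeWhile (· == N)).length - 1
  w.set j E

/-!
Each step changes the depth by its weight: `+1` for `N`, `-1` for `E`, `0` for `D`. The first
deepest point `k` is a strict first maximum, so step `k` goes up. After `k` the path stays at the
maximum through a run of `D`'s, so the next non-`D` step cannot go up. Before `k` a run of `D`'s
keeps the depth at `max - 1`, so the preceding non-`D` step cannot come down from the maximum:
that would give an earlier deepest point.
-/

def Step.weight : Step → ℤ
  | N => 1
  | D => 0
  | E => -1

lemma Step.eq_N_of_weight_pos {s : Step} (h : 0 < s.weight) : s = N := by
  cases s <;> simp_all [Step.weight]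

lemma Step.eq_N_of_ne_D_of_weight_nonneg {s : Step} (hD : s ≠ D) (h : 0 ≤ s.weight) :
    s = N := by
  cases s <;> simp_all [Step.weight]

lemma Step.eq_E_of_ne_D_of_weight_nonpos {s : Step} (hD : s ≠ D) (h : s.weight ≤ 0) :
    s = E := by
  cases s <;> simp_all [Step.weight]

lemma length_eq_of_mem_words {l : ℕ} {w : List Step} (h : w ∈ Words l) : w.length = l := by
  obtain ⟨f, -, rfl⟩ := Finset.mem_image.mp h
  exact List.length_ofFn

@[simp]
lemma depth_zero (w : List Step) : depth w 0 = 0 := by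
  simp [depth]

lemma depth_succ {w : List Step} {i : ℕ} (hi : i < w.length) :
    depth w (i + 1) = depth w i + (w.getD i E).weight := by
  rw [List.getD_eq_getElem _ _ hi]
  simp only [depth, List.take_add_one, List.getElem?_eq_getElem hi, Option.toList_some,
    List.count_append]
  cases w[i] <;> simp [Step.weight] <;> ring

lemma depth_eq_of_forall_getD_eq_D {w : List Step} {a b : ℕ} (hab : a ≤ b)
    (hD : ∀ i, a ≤ i → i < b → w.getD i E = D) : depth w b = depth w a := by
  induction b, hab using Nat.le_induction with
  | base => rfl
  | succ m ham ih =>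
    have hm : w.getD m E = D := hD m ham (Nat.lt_succ_self m)
    have hlt : m < w.length := by
      by_contra h
      rw [List.getD_eq_default _ _ (not_lt.mp h)] at hm
      exact Step.noConfusion hm
    rw [depth_succ hlt, hm, ih fun i hi hib => hD i hi (by omega)]
    simp [Step.weight]

lemma isMaxDepth_iff {w : List Step} {k : ℕ} :
    isMaxDepth w k = true ↔ ∀ i ≤ w.length, depth w i ≤ depth w k := by
  simp [isMaxDepth, List.all_eq_true, List.mem_range]

lemma exists_isMaxDepth (w : List Step) : ∃ k ≤ w.length, isMaxDepth w k = true := by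
  obtain ⟨k, hk, hmax⟩ :=
    Finset.exists_max_image (Finset.range (w.length + 1)) (depth w) ⟨0, by simp⟩
  exact ⟨k, Nat.lt_succ_iff.mp (Finset.mem_range.mp hk),
    isMaxDepth_iff.mpr fun i hi => hmax i (Finset.mem_range.mpr (Nat.lt_succ_of_le hi))⟩

lemma firstDeep_lt_length_range (w : List Step) :
    firstDeep w < (List.range (w.length + 1)).length := by
  obtain ⟨k, hk, hmax⟩ := exists_isMaxDepth w
  exact List.findIdx_lt_length_of_exists ⟨k, List.mem_range.mpr (Nat.lt_succ_of_le hk), hmax⟩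

lemma firstDeep_le_length (w : List Step) : firstDeep w ≤ w.length := by
  simpa [Nat.lt_succ_iff] using firstDeep_lt_length_range w

lemma depth_le_depth_firstDeep {w : List Step} {i : ℕ} (hi : i ≤ w.length) :
    depth w i ≤ depth w (firstDeep w) := by
  have h : isMaxDepth w (firstDeep w) = true := by
    convert List.findIdx_getElem (w := firstDeep_lt_length_range w)
    exact (List.getElem_range _).symm
  exact isMaxDepth_iff.mp h i hi

lemma depth_lt_depth_firstDeep {w : List Step} {i : ℕ} (hi : i < firstDeep w) :
    depth w i < depth w (firstDeep w) := by
  have h := List.not_of_lt_findIdx (p := isMaxDepth w) (xs := List.range (w.length + 1)) hi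
  simp only [List.getElem_range] at h
  obtain ⟨i', hi', hlt⟩ : ∃ i' ≤ w.length, depth w i < depth w i' := by
    by_contra! hmax
    simp [isMaxDepth_iff.mpr hmax] at h
  exact hlt.trans_le (depth_le_depth_firstDeep hi')

lemma depth_firstDeep_pos_of_bad {w : List Step} (h : bad w = true) :
    0 < depth w (firstDeep w) := by
  simp only [bad, List.any_eq_true, List.mem_range, decide_eq_true_eq] at h
  obtain ⟨m, hm, hlt⟩ := h
  have hm_pos : 0 < depth w m := by unfold depth; omega
  exact hm_pos.trans_le (depth_le_depth_firstDeep (Nat.lt_succ_iff.mp hm))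

/-- in a bad path, the first deepest step w_k is an N; the first
non-D step after position k (if any) is an E; and the last non-D step before
position k (if any) is an N.  (Indices are 1-based; w_j is `w.getD (j-1) E`.) -/
theorem firstDeep_structure (n l : ℕ) (w : List Step) (hw : w ∈ BDelSet n l) :
    w.getD (firstDeep w - 1) E = N ∧
      (∀ j, firstDeep w < j → j ≤ l → w.getD (j - 1) E ≠ D →
        (∀ i, firstDeep w < i → i < j → w.getD (i - 1) E = D) → w.getD (j - 1) E = E) ∧
      (∀ j, 1 ≤ j → j < firstDeep w → w.getD (j - 1) E ≠ D →
        (∀ i, j < i → i < firstDeep w → w.getD (i - 1) E = D) → w.getD (j - 1) E = N) := by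
  obtain ⟨hdel, hbad⟩ := Finset.mem_filter.mp hw
  have hlen : w.length = l := length_eq_of_mem_words (Finset.mem_filter.mp hdel).1
  have hkl : firstDeep w ≤ l := hlen ▸ firstDeep_le_length w
  have hpos : 0 < depth w (firstDeep w) := depth_firstDeep_pos_of_bad hbad
  have hmax : ∀ i ≤ l, depth w i ≤ depth w (firstDeep w) := fun i hi =>
    depth_le_depth_firstDeep (hlen ▸ hi)
  have hfirst : ∀ i < firstDeep w, depth w i < depth w (firstDeep w) := fun i hi =>
    depth_lt_depth_firstDeep hi
  have hsucc :
      ∀ i, 1 ≤ i → i ≤ l → depth w i = depth w (i - 1) + (w.getD (i - 1) E).weight :=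
    fun i hi hil => by simpa [Nat.sub_add_cancel hi] using depth_succ (i := i - 1) (by omega)
  generalize firstDeep w = k at *
  have hk : 1 ≤ k := Nat.one_le_iff_ne_zero.mpr fun h0 => by simp [h0] at hpos
  have hstep_k := hsucc k hk hkl
  have hN : w.getD (k - 1) E = N :=
    Step.eq_N_of_weight_pos (by linarith [hfirst (k - 1) (by omega)])
  rw [hN, show N.weight = 1 from rfl] at hstep_k
  refine ⟨hN, ?_, ?_⟩
  · intro j hkj hjl hne hD
    have hrun : depth w (j - 1) = depth w k :=
      depth_eq_of_forall_getD_eq_D (by omega) fun i hi hij => by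
        simpa using hD (i + 1) (by omega) (by omega)
    have hstep := hsucc j (by omega) hjl
    have hj := hmax j hjl
    exact Step.eq_E_of_ne_D_of_weight_nonpos hne (by omega)
  · intro j hj hjk hne hD
    have hrun : depth w (k - 1) = depth w j :=
      depth_eq_of_forall_getD_eq_D (by omega) fun i hi hik => by
        simpa using hD (i + 1) (by omega) (by omega)
    have hstep := hsucc j hj (by omega)
    have hearlier := hfirst (j - 1) (by omega)
    exact Step.eq_N_of_ne_D_of_weight_nonneg hne (by omega)
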